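/- Every complex eigenvalue μ of the matrix A satisfies |μ| ≤ 1 − min_j b_j, and there exists a complex eigenvalue μ₀ of A with |μ₀| ≥ 1 − max_j b_j; in particular, when b j = 0 for all j, A = F and has spectral radius equal to 1. -/

import Mathlib

/-!
`A` is entrywise nonnegative because `(1 - K)⁻¹ = ∑ₚ Kᵖ` is the Neumann series of a nonnegative
matrix with row sums `< 1`. Since `F (1 - b) = (1 - K) 𝟙`, the matrix `S` maps `1 - b` to `𝟙`, so
row `i` of `A` sums to `1 - b i`. Gershgorin's theorem bounds every eigenvalue by the largest row
sum. Conversely the row sums of `Aᵖ` are at least `(1 - max b)ᵖ`, so by Gelfand's formula the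
spectral radius, which is attained by an eigenvalue, is at least `1 - max b`.
-/

open Matrix Finset

theorem sum_mul_lt_one_of_sum_eq_one {ι : Type*} [Fintype ι] {w b : ι → ℝ} (hw : ∀ j, 0 ≤ w j)
    (hw1 : ∑ j, w j = 1) (hb : ∀ j, b j < 1) : ∑ j, w j * b j < 1 := by
  obtain ⟨k, -, hk⟩ := exists_ne_zero_of_sum_ne_zero (hw1.trans_ne one_ne_zero)
  calc ∑ j, w j * b j < ∑ j, w j * 1 :=
        sum_lt_sum (fun j _ => by gcongr; exacts [hw j, (hb j).le])
          ⟨k, mem_univ k, by gcongr; exacts [(hw k).lt_of_ne' hk, hb k]⟩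
    _ = 1 := by simp [hw1]

theorem spectrum.exists_le_norm_of_le_norm_pow {A : Type*} [NormedRing A] [NormedAlgebra ℂ A]
    [CompleteSpace A] [Nontrivial A] {a : A} {c : ℝ} (hc : 0 ≤ c)
    (h : ∀ p : ℕ, c ^ p ≤ ‖a ^ p‖) : ∃ μ ∈ spectrum ℂ a, c ≤ ‖μ‖ := by
  obtain ⟨μ, hμ, hρ⟩ := spectrum.exists_nnnorm_eq_spectralRadius a
  refine ⟨μ, hμ, ?_⟩
  have hlim := spectrum.pow_norm_pow_one_div_tendsto_nhds_spectralRadius a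
  rw [← hρ] at hlim
  have hle : ENNReal.ofReal c ≤ ‖μ‖₊ := by
    refine ge_of_tendsto hlim ?_
    filter_upwards [Filter.eventually_ge_atTop 1] with p hp
    gcongr
    calc c = (c ^ p) ^ (1 / (p : ℝ)) := by
          rw [one_div, Real.pow_rpow_inv_natCast hc (by omega)]
      _ ≤ ‖a ^ p‖ ^ (1 / (p : ℝ)) := by gcongr; exact h p
  simpa using (ENNReal.ofReal_le_iff_le_toReal ENNReal.coe_ne_top).mp hle

namespace Matrix

variable {ι : Type*} [Fintype ι] [DecidableEq ι]

theorem exists_norm_le_sum_norm_of_mem_spectrum {𝕜 : Type*} [NormedField 𝕜]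
    {M : Matrix ι ι 𝕜} {μ : 𝕜} (hμ : μ ∈ spectrum 𝕜 M) : ∃ i, ‖μ‖ ≤ ∑ j, ‖M i j‖ := by
  have hμ' : Module.End.HasEigenvalue M.toLin' μ :=
    Module.End.hasEigenvalue_iff_mem_spectrum.mpr (by rwa [spectrum_toLin'])
  obtain ⟨i, hi⟩ := eigenvalue_mem_ball hμ'
  refine ⟨i, ?_⟩
  rw [← add_sum_erase _ _ (mem_univ i)]
  calc ‖μ‖ ≤ ‖M i i‖ + ‖μ - M i i‖ := norm_le_insert' μ (M i i)
    _ ≤ _ := by gcongr; exact mem_closedBall_iff_norm.mp hi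

theorem norm_le_of_mem_spectrum_map_ofReal {M : Matrix ι ι ℝ} (hM : ∀ i j, 0 ≤ M i j) {r : ℝ}
    (hr : ∀ i, ∑ j, M i j ≤ r) {μ : ℂ} (hμ : μ ∈ spectrum ℂ (M.map Complex.ofReal)) :
    ‖μ‖ ≤ r := by
  obtain ⟨i, hi⟩ := exists_norm_le_sum_norm_of_mem_spectrum hμ
  have hnorm : ∀ j, ‖M.map Complex.ofReal i j‖ = M i j := fun j => by
    rw [map_apply, Complex.norm_real, Real.norm_of_nonneg (hM i j)]
  simp only [hnorm] at hi
  exact hi.trans (hr i)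

theorem le_sum_pow_apply {M : Matrix ι ι ℝ} (hM : ∀ i j, 0 ≤ M i j) {c : ℝ} (hc : 0 ≤ c)
    (h : ∀ i, c ≤ ∑ j, M i j) (p : ℕ) (i : ι) : c ^ p ≤ ∑ j, (M ^ p) i j := by
  induction p generalizing i with
  | zero => simp [one_apply]
  | succ p ih =>
    calc c ^ (p + 1) = c ^ p * c := pow_succ c p
      _ ≤ (∑ k, (M ^ p) i k) * c := by gcongr; exact ih i
      _ ≤ ∑ k, (M ^ p) i k * ∑ j, M k j := by
          rw [sum_mul]
          exact sum_le_sum fun k _ => by gcongr; exacts [pow_apply_nonneg hM p i k, h k]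
      _ = ∑ j, (M ^ (p + 1)) i j := by
          simp only [pow_succ, mul_apply, mul_sum]
          exact sum_comm

theorem inv_one_sub_mul_diagonal_mul_mulVec_one_sub {F : Matrix ι ι ℝ}
    (hF : ∀ i, ∑ j, F i j = 1) {b : ι → ℝ} (h : IsUnit (1 - F * diagonal b)) :
    ((1 - F * diagonal b)⁻¹ * F) *ᵥ (1 - b) = 1 := by
  have hF1 : F *ᵥ 1 = 1 := by ext i; simp [mulVec, dotProduct, hF]
  have hb : diagonal b *ᵥ 1 = b := by ext i; simp [mulVec_diagonal]
  have hFb : F *ᵥ (1 - b) = (1 - F * diagonal b) *ᵥ 1 := by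
    rw [mulVec_sub, sub_mulVec, one_mulVec, ← mulVec_mulVec, hF1, hb]
  rw [← mulVec_mulVec, hFb, mulVec_mulVec,
    nonsing_inv_mul _ ((isUnit_iff_isUnit_det _).mp h), one_mulVec]

section LinftyOp

open scoped Matrix.Norms.Operator

theorem sum_norm_apply_le_linfty_opNorm {m n α : Type*} [Fintype m] [Fintype n]
    [SeminormedAddCommGroup α] (M : Matrix m n α) (i : m) : ∑ j, ‖M i j‖ ≤ ‖M‖ := by
  have := le_sup (f := fun i => ∑ j, ‖M i j‖₊) (mem_univ i)
  rw [← NNReal.coe_le_coe] at this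
  simpa [linfty_opNorm_def] using this

theorem linfty_opNorm_lt_one_of_nonneg {K : Matrix ι ι ℝ} (hK : ∀ i j, 0 ≤ K i j)
    (hrow : ∀ i, ∑ j, K i j < 1) : ‖K‖ < 1 := by
  rw [linfty_opNorm_def, ← NNReal.coe_one, NNReal.coe_lt_coe, Finset.sup_lt_iff (by simp)]
  intro i _
  rw [← NNReal.coe_lt_coe]
  push_cast
  simpa [Real.norm_of_nonneg (hK i _)] using hrow i

theorem isUnit_one_sub_of_nonneg_of_sum_lt_one {K : Matrix ι ι ℝ} (hK : ∀ i j, 0 ≤ K i j)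
    (hrow : ∀ i, ∑ j, K i j < 1) : IsUnit (1 - K) :=
  isUnit_one_sub_of_norm_lt_one (linfty_opNorm_lt_one_of_nonneg hK hrow)

theorem inv_one_sub_apply_nonneg {K : Matrix ι ι ℝ} (hK : ∀ i j, 0 ≤ K i j)
    (hrow : ∀ i, ∑ j, K i j < 1) (i j : ι) : 0 ≤ (1 - K)⁻¹ i j := by
  have hsum := hasSum_geom_series_inverse K (linfty_opNorm_lt_one_of_nonneg hK hrow)
  rw [← nonsing_inv_eq_ringInverse] at hsum
  exact (Pi.hasSum.mp (Pi.hasSum.mp hsum i) j).nonneg fun p => pow_apply_nonneg hK p i j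

theorem exists_mem_spectrum_map_ofReal_le_norm [Nonempty ι] {M : Matrix ι ι ℝ}
    (hM : ∀ i j, 0 ≤ M i j) {c : ℝ} (hc : 0 ≤ c) (h : ∀ i, c ≤ ∑ j, M i j) :
    ∃ μ ∈ spectrum ℂ (M.map Complex.ofReal), c ≤ ‖μ‖ := by
  have : CompleteSpace (Matrix ι ι ℂ) := FiniteDimensional.complete ℂ _
  obtain ⟨i⟩ := ‹Nonempty ι›
  refine spectrum.exists_le_norm_of_le_norm_pow hc fun p => ?_
  have hpow : M.map Complex.ofReal ^ p = (M ^ p).map Complex.ofReal :=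
    (map_pow Complex.ofRealHom.mapMatrix M p).symm
  calc c ^ p ≤ ∑ j, (M ^ p) i j := le_sum_pow_apply hM hc h p i
    _ = ∑ j, ‖(M.map Complex.ofReal ^ p) i j‖ := by
        simp only [hpow, map_apply, Complex.norm_real,
          Real.norm_of_nonneg (pow_apply_nonneg hM p i _)]
    _ ≤ ‖M.map Complex.ofReal ^ p‖ := sum_norm_apply_le_linfty_opNorm _ i

end LinftyOp

end Matrix

theorem stmt_8_general (n : ℕ)
    (hne : (Finset.univ : Finset (Fin n)).Nonempty)
    (F : Matrix (Fin n) (Fin n) ℝ)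
    (hFnonneg : ∀ i j, 0 ≤ F i j)
    (hFrow : ∀ i, ∑ j, F i j = 1)
    (b : Fin n → ℝ) (hb0 : ∀ j, 0 ≤ b j) (hb1 : ∀ j, b j < 1)
    (K : Matrix (Fin n) (Fin n) ℝ)
    (hK : ∀ i j, K i j = F i j * b j)
    (S : Matrix (Fin n) (Fin n) ℝ)
    (hS : S = (1 - K)⁻¹ * F)
    (A : Matrix (Fin n) (Fin n) ℝ)
    (hA : ∀ i j, A i j = (1 - b i) * S i j * (1 - b j)) :
    (∀ μ : ℂ, μ ∈ spectrum ℂ (A.map Complex.ofReal) →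
        ‖μ‖ ≤ 1 - Finset.univ.inf' hne b) ∧
    (∃ μ₀ : ℂ, μ₀ ∈ spectrum ℂ (A.map Complex.ofReal) ∧
        1 - Finset.univ.sup' hne b ≤ ‖μ₀‖) ∧
    ((∀ j, b j = 0) → A = F ∧
        IsGreatest ((fun z : ℂ => ‖z‖) '' spectrum ℂ (A.map Complex.ofReal)) 1) := by
  have : Nonempty (Fin n) := univ_nonempty_iff.mp hne
  obtain rfl : K = F * diagonal b := by ext i j; simp [hK]
  have hKnonneg : ∀ i j, 0 ≤ (F * diagonal b) i j := fun i j =>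
    hK i j ▸ mul_nonneg (hFnonneg i j) (hb0 j)
  have hKrow : ∀ i, ∑ j, (F * diagonal b) i j < 1 := fun i => by
    simpa only [hK] using sum_mul_lt_one_of_sum_eq_one (hFnonneg i) (hFrow i) hb1
  have hSnonneg : ∀ i j, 0 ≤ S i j := fun i j => by
    rw [hS, mul_apply]
    exact sum_nonneg fun k _ =>
      mul_nonneg (inv_one_sub_apply_nonneg hKnonneg hKrow i k) (hFnonneg k j)
  have hAnonneg : ∀ i j, 0 ≤ A i j := fun i j => hA i j ▸
    mul_nonneg (mul_nonneg (sub_nonneg.mpr (hb1 i).le) (hSnonneg i j)) (sub_nonneg.mpr (hb1 j).le)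
  have hArow : ∀ i, ∑ j, A i j = 1 - b i := fun i => by
    have hSb := congrFun (hS ▸ inv_one_sub_mul_diagonal_mul_mulVec_one_sub hFrow
      (isUnit_one_sub_of_nonneg_of_sum_lt_one hKnonneg hKrow)) i
    simp only [mulVec, dotProduct, Pi.sub_apply, Pi.one_apply] at hSb
    simp only [hA, mul_assoc, ← mul_sum, hSb, mul_one]
  have hupper : ∀ μ ∈ spectrum ℂ (A.map Complex.ofReal), ‖μ‖ ≤ 1 - univ.inf' hne b :=
    fun μ => norm_le_of_mem_spectrum_map_ofReal hAnonneg fun i => by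
      rw [hArow]; linarith [inf'_le b (mem_univ i)]
  have hlower : ∃ μ₀ ∈ spectrum ℂ (A.map Complex.ofReal), 1 - univ.sup' hne b ≤ ‖μ₀‖ :=
    exists_mem_spectrum_map_ofReal_le_norm hAnonneg
      (sub_nonneg.mpr ((sup'_lt_iff hne).mpr fun j _ => hb1 j).le)
      fun i => by rw [hArow]; linarith [le_sup' b (mem_univ i)]
  refine ⟨hupper, hlower, fun hb => ?_⟩
  obtain rfl : b = 0 := funext hb
  obtain ⟨μ₀, hμ₀, hμ₀_ge⟩ := hlower
  refine ⟨by ext i j; simp [hA, hS], ⟨μ₀, hμ₀, le_antisymm ?_ (by simpa using hμ₀_ge)⟩, ?_⟩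
  · simpa using hupper μ₀ hμ₀
  · rintro _ ⟨μ, hμ, rfl⟩
    simpa using hupper μ hμ

/-- Every complex eigenvalue `μ` of `A` satisfies
`|μ| ≤ 1 − min_j b_j`, and there exists a complex eigenvalue `μ₀` of `A` with
`|μ₀| ≥ 1 − max_j b_j`; in particular, when `b j = 0` for all `j`, `A = F` and
`A` has spectral radius equal to `1`. -/
theorem stmt_8 (n : ℕ) (hn : 1 ≤ n)
    (hne : (Finset.univ : Finset (Fin n)).Nonempty)
    (F : Matrix (Fin n) (Fin n) ℝ)
    (hFnonneg : ∀ i j, 0 ≤ F i j)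
    (hFrow : ∀ i, ∑ j, F i j = 1)
    (b : Fin n → ℝ) (hb0 : ∀ j, 0 ≤ b j) (hb1 : ∀ j, b j < 1)
    (K : Matrix (Fin n) (Fin n) ℝ)
    (hK : ∀ i j, K i j = F i j * b j)
    (hInv : IsUnit (1 - K))
    (S : Matrix (Fin n) (Fin n) ℝ)
    (hS : S = (1 - K)⁻¹ * F)
    (A : Matrix (Fin n) (Fin n) ℝ)
    (hA : ∀ i j, A i j = (1 - b i) * S i j * (1 - b j)) :
    (∀ μ : ℂ, μ ∈ spectrum ℂ (A.map Complex.ofReal) →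
        ‖μ‖ ≤ 1 - Finset.univ.inf' hne b) ∧
    (∃ μ₀ : ℂ, μ₀ ∈ spectrum ℂ (A.map Complex.ofReal) ∧
        1 - Finset.univ.sup' hne b ≤ ‖μ₀‖) ∧
    ((∀ j, b j = 0) → A = F ∧
        IsGreatest ((fun z : ℂ => ‖z‖) '' spectrum ℂ (A.map Complex.ofReal)) 1) :=
  stmt_8_general n hne F hFnonneg hFrow b hb0 hb1 K hK S hS A hA
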